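/- arXiv:2006.02177 — 8 statements merged into one kernel-verified Lean document; each statement's English description precedes it below -/
import Mathlib

section
/- Let m ≥ 1, n ≥ 0 with m ≥ n, and fix a nonzero B ∈ ℂ. For χ : {0,...,m} × {0,...,n} → ℂ define the transform χ*(a,b) = Σ_{r=0}^{a} Σ_{s=0}^{b} C(a,r) C(b,s) B^r conj(B)^s χ(a-r, b-s). Suppose χ(a,b) = 0 for all a + b ≤ m - 1, and (a+1)·B·χ(a,b) + b·conj(B)·χ(a+1, b-1) = 0 for all pairs with m ≤ a + b ≤ m + n - 1 (indices in range). Then χ*(a,b) = χ(a,b) for all (a,b). -/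
/-- sufficiency direction of the main Theorem: if all components
on lines a+b ≤ m-1 vanish and the linear conditions hold on lines m ≤ a+b ≤ m+n-1,
then the totally symmetric spinor is invariant under the null rotation with
parameter B. -/
theorem stmt_4 (m n : ℕ) (hm : 1 ≤ m) (hnm : n ≤ m) (B : ℂ) (hB : B ≠ 0)
    (χ : ℕ × ℕ → ℂ)
    (h0 : ∀ a b : ℕ, a ≤ m → b ≤ n → a + b ≤ m - 1 → χ (a, b) = 0)
    (hlin : ∀ a b : ℕ, a + 1 ≤ m → 1 ≤ b → b ≤ n → m ≤ a + b → a + b ≤ m + n - 1 →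
      ((a + 1 : ℕ) : ℂ) * B * χ (a, b)
        + (b : ℂ) * (starRingEnd ℂ) B * χ (a + 1, b - 1) = 0) :
    ∀ a b : ℕ, a ≤ m → b ≤ n →
      (∑ r ∈ Finset.range (a + 1), ∑ s ∈ Finset.range (b + 1),
          (a.choose r : ℂ) * (b.choose s : ℂ) * B ^ r * ((starRingEnd ℂ) B) ^ s *
            χ (a - r, b - s))
        = χ (a, b) := by
  intro a b ha hb
  set cB := (starRingEnd ℂ) B with hcB
  set t : ℕ → ℕ → ℂ := fun r s =>
    (a.choose r : ℂ) * (b.choose s : ℂ) * B ^ r * cB ^ s * χ (a - r, b - s) with ht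
  have htza : ∀ r s, a < r → t r s = 0 := by
    intro r s h; simp [ht, Nat.choose_eq_zero_of_lt h]
  have htzb : ∀ r s, b < s → t r s = 0 := by
    intro r s h; simp [ht, Nat.choose_eq_zero_of_lt h]
  -- key lemma: diagonal sums vanish for k ≥ 1
  have key : ∀ k : ℕ, 1 ≤ k → ∑ s ∈ Finset.range (k + 1), t (k - s) s = 0 := by
    intro k hk
    have inv : ∀ M : ℕ, M ≤ k →
        (k : ℂ) * ∑ s ∈ Finset.range M, t (k - s) s
          = -(M : ℂ) * (a.choose (k - M) : ℂ) * (b.choose M : ℂ)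
              * B ^ (k - M) * cB ^ M * χ (a - (k - M), b - M) := by
      intro M
      induction M with
      | zero => intro _; simp
      | succ M ih =>
        intro hM1
        have hMk : M < k := hM1
        have ihe := ih (Nat.le_of_lt hMk)
        rw [Finset.sum_range_succ, mul_add, ihe]
        simp only [ht]
        have e2 : b - (M + 1) = b - M - 1 := by omega
        rw [e2]
        by_cases hka : k - M ≤ a
        · have e1 : a - (k - (M + 1)) = a - (k - M) + 1 := by omega
          have epow : B ^ (k - M) = B ^ (k - (M + 1)) * B := by
            rw [← pow_succ]; congr 1; omega
          rw [e1, epow, pow_succ]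
          by_cases hMb : M < b
          · by_cases hline : m ≤ a - (k - M) + (b - M)
            · have e := hlin (a - (k - M)) (b - M) (by omega) (by omega) (by omega)
                (by omega) (by omega)
              push_cast at e
              have id1n : a.choose (k - M) * (k - M)
                  = a.choose (k - (M + 1)) * (a - (k - M) + 1) := by
                have h := Nat.choose_succ_right_eq a (k - (M + 1))
                have h1 : k - (M + 1) + 1 = k - M := by omega
                have h2 : a - (k - (M + 1)) = a - (k - M) + 1 := by omega
                rw [h1, h2] at h
                exact h
              have id1 : (a.choose (k - M) : ℂ) * ((k - M : ℕ) : ℂ)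
                  = (a.choose (k - (M + 1)) : ℂ) * (((a - (k - M) : ℕ) : ℂ) + 1) := by
                exact_mod_cast congrArg (Nat.cast : ℕ → ℂ) id1n
              have id2 : (b.choose (M + 1) : ℂ) * ((M : ℂ) + 1)
                  = (b.choose M : ℂ) * ((b - M : ℕ) : ℂ) := by
                exact_mod_cast congrArg (Nat.cast : ℕ → ℂ) (Nat.choose_succ_right_eq b M)
              have c1 : ((k - M : ℕ) : ℂ) = (k : ℂ) - (M : ℂ) := Nat.cast_sub hMk.le
              push_cast
              linear_combination
                ((a.choose (k - (M + 1)) : ℂ) * (b.choose M : ℂ) * B ^ (k - (M + 1))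
                    * cB ^ M) * e
                + ((b.choose M : ℂ) * B ^ (k - (M + 1)) * B * cB ^ M
                    * χ (a - (k - M), b - M)) * id1
                - ((a.choose (k - M) : ℂ) * (b.choose M : ℂ) * B ^ (k - (M + 1)) * B
                    * cB ^ M * χ (a - (k - M), b - M)) * c1
                + ((a.choose (k - (M + 1)) : ℂ) * B ^ (k - (M + 1)) * cB ^ M * cB
                    * χ (a - (k - M) + 1, b - M - 1)) * id2
            · have z1 : χ (a - (k - M), b - M) = 0 :=
                h0 _ _ (by omega) (by omega) (by omega)
              have z2 : χ (a - (k - M) + 1, b - M - 1) = 0 :=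
                h0 _ _ (by omega) (by omega) (by omega)
              rw [z1, z2]; ring
          · have z1 : χ (a - (k - M), b - M) = 0 :=
              h0 _ _ (by omega) (by omega) (by omega)
            have zc : b.choose (M + 1) = 0 := Nat.choose_eq_zero_of_lt (by omega)
            rw [z1, zc]; push_cast; ring
        · have zc : a.choose (k - M) = 0 := Nat.choose_eq_zero_of_lt (by omega)
          rw [zc]
          by_cases hka' : k - (M + 1) ≤ a
          · have hEq2 : a - (k - (M + 1)) = 0 := by omega
            rw [hEq2]
            by_cases hMb' : M + 1 ≤ b
            · have z : χ (0, b - M - 1) = 0 := h0 _ _ (by omega) (by omega) (by omega)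
              rw [z]; push_cast; ring
            · have zc2 : b.choose (M + 1) = 0 := Nat.choose_eq_zero_of_lt (by omega)
              rw [zc2]; push_cast; ring
          · have zc2 : a.choose (k - (M + 1)) = 0 := Nat.choose_eq_zero_of_lt (by omega)
            rw [zc2]; push_cast; ring
    have h1 := inv k le_rfl
    have hk0 : (k : ℂ) ≠ 0 := Nat.cast_ne_zero.mpr (by omega)
    have hz : (k : ℂ) * ∑ s ∈ Finset.range (k + 1), t (k - s) s = 0 := by
      rw [Finset.sum_range_succ, mul_add, h1]
      simp only [ht, Nat.sub_self, Nat.sub_zero, Nat.choose_zero_right, pow_zero,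
        Nat.cast_one]
      ring
    exact (mul_eq_zero.mp hz).resolve_left hk0
  -- reindex the double sum along diagonals
  set N := a + b + 1 with hN
  have hinner : ∀ r, ∑ s ∈ Finset.range (b + 1), t r s = ∑ s ∈ Finset.range N, t r s := by
    intro r
    refine Finset.sum_subset (Finset.range_subset_range.mpr (by omega)) ?_
    intro x _ hx
    refine htzb r x ?_
    simp only [Finset.mem_range, not_lt] at hx; omega
  have hsq : ∑ r ∈ Finset.range (a + 1), ∑ s ∈ Finset.range (b + 1), t r s
      = ∑ r ∈ Finset.range N, ∑ s ∈ Finset.range N, t r s := by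
    rw [Finset.sum_congr rfl fun r _ => hinner r]
    refine Finset.sum_subset (Finset.range_subset_range.mpr (by omega)) ?_
    intro x _ hx
    simp only [Finset.mem_range, not_lt] at hx
    exact Finset.sum_eq_zero fun s _ => htza x s (by omega)
  have hdiag : ∑ k ∈ Finset.range N, ∑ s ∈ Finset.range (k + 1), t (k - s) s
      = ∑ r ∈ Finset.range N, ∑ s ∈ Finset.range N, t r s := by
    rw [Finset.sum_range_diag_flip N (fun s r => t r s)]
    rw [Finset.sum_comm]
    refine Finset.sum_congr rfl ?_
    intro s hs
    simp only [Finset.mem_range] at hs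
    refine Finset.sum_subset (Finset.range_subset_range.mpr (by omega)) ?_
    intro r _ hr
    simp only [Finset.mem_range, not_lt] at hr
    by_cases hrb : a < r
    · exact htza r s hrb
    · exact htzb r s (by omega)
  have hTot : ∑ r ∈ Finset.range (a + 1), ∑ s ∈ Finset.range (b + 1), t r s = χ (a, b) := by
    rw [hsq, ← hdiag, hN, Finset.sum_range_succ']
    have hz : ∑ i ∈ Finset.range (a + b), ∑ s ∈ Finset.range (i + 1 + 1), t (i + 1 - s) s
        = 0 := Finset.sum_eq_zero fun i _ => key (i + 1) (by omega)
    rw [hz, zero_add]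
    simp [ht]
  simpa only [ht] using hTot
end

section
/- Let m ≥ 1, n ≥ 0 with m ≥ n, and fix B ∈ ℂ with B ≠ 0. For χ : {0,...,m} × {0,...,n} → ℂ define for each real t the transform χ*_t(a,b) = Σ_{r=0}^{a} Σ_{s=0}^{b} C(a,r) C(b,s) (tB)^r conj(tB)^s χ(a-r, b-s). If χ*_t(a,b) = χ(a,b) for all (a,b) and all t ∈ ℝ, then: (1) χ(a,b) = 0 whenever a + b ≤ m - 1, and (2) (a+1)·B·χ(a,b) + b·conj(B)·χ(a+1, b-1) = 0 for all pairs with m ≤ a + b ≤ m + n - 1. -/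
private lemma key_lemma (m n : ℕ) (B : ℂ)
    (χ : ℕ × ℕ → ℂ)
    (hinv : ∀ t : ℝ, ∀ a b : ℕ, a ≤ m → b ≤ n →
      (∑ r ∈ Finset.range (a + 1), ∑ s ∈ Finset.range (b + 1),
          (a.choose r : ℂ) * (b.choose s : ℂ) * ((t : ℂ) * B) ^ r *
            ((starRingEnd ℂ) ((t : ℂ) * B)) ^ s * χ (a - r, b - s))
        = χ (a, b))
    (p q : ℕ) (hp1 : 1 ≤ p) (hpm : p ≤ m) (hq : q ≤ n) :
    (p : ℂ) * B * χ (p - 1, q) + (q : ℂ) * (starRingEnd ℂ) B * χ (p, q - 1) = 0 := by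
  set c : ℕ → ℕ → ℂ := fun r s =>
    (p.choose r : ℂ) * (q.choose s : ℂ) * B ^ r * ((starRingEnd ℂ) B) ^ s * χ (p - r, q - s)
    with hc_def
  set P : Polynomial ℂ :=
    (∑ r ∈ Finset.range (p + 1), ∑ s ∈ Finset.range (q + 1),
      Polynomial.C (c r s) * Polynomial.X ^ (r + s)) - Polynomial.C (χ (p, q)) with hP_def
  have hroot : ∀ t : ℝ, P.eval (t : ℂ) = 0 := by
    intro t
    have h := hinv t p q hpm hq
    simp only [hP_def, Polynomial.eval_sub, Polynomial.eval_finset_sum, Polynomial.eval_mul,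
      Polynomial.eval_C, Polynomial.eval_pow, Polynomial.eval_X]
    rw [sub_eq_zero, ← h]
    refine Finset.sum_congr rfl fun r _ => Finset.sum_congr rfl fun s _ => ?_
    simp only [hc_def, map_mul, Complex.conj_ofReal]
    ring
  have hP : P = 0 := by
    apply Polynomial.eq_zero_of_infinite_isRoot
    refine Set.Infinite.mono ?_ (Set.infinite_range_of_injective Complex.ofReal_injective)
    rintro z ⟨t, rfl⟩
    exact hroot t
  have h1 : P.coeff 1 = 0 := by rw [hP]; simp
  have hc : P.coeff 1 = ∑ r ∈ Finset.range (p + 1), ∑ s ∈ Finset.range (q + 1),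
      if 1 = r + s then c r s else 0 := by
    simp [hP_def, Polynomial.finset_sum_coeff, Polynomial.coeff_X_pow, mul_ite, mul_one, mul_zero]
  have hg : ∀ r ∈ Finset.range (p + 1),
      (∑ s ∈ Finset.range (q + 1), if 1 = r + s then c r s else 0)
        = (if r = 1 then c 1 0 else 0) + (if r = 0 then (if 1 ≤ q then c 0 1 else 0) else 0) := by
    intro r _
    match r with
    | 0 =>
      rw [Finset.sum_congr rfl (fun s _ => if_congr (by omega : (1 = 0 + s) ↔ (1 = s)) rfl rfl),
        Finset.sum_ite_eq (Finset.range (q + 1)) 1 (fun s => c 0 s)]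
      by_cases h01 : 1 ≤ q <;> simp [h01, Nat.lt_succ_iff] <;> intro h <;>
        exact absurd h (by omega)
    | 1 =>
      rw [Finset.sum_congr rfl (fun s _ => if_congr (by omega : (1 = 1 + s) ↔ (0 = s)) rfl rfl),
        Finset.sum_ite_eq (Finset.range (q + 1)) 0 (fun s => c 1 s)]
      simp
    | (r + 2) =>
      rw [Finset.sum_eq_zero]
      · simp
      · intro s _
        rw [if_neg]
        omega
  rw [Finset.sum_congr rfl hg] at hc
  rw [Finset.sum_add_distrib, Finset.sum_ite_eq' (Finset.range (p + 1)) 1,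
    Finset.sum_ite_eq' (Finset.range (p + 1)) 0] at hc
  have h1mem : (1 : ℕ) ∈ Finset.range (p + 1) := by simp; omega
  have h0mem : (0 : ℕ) ∈ Finset.range (p + 1) := by simp
  rw [if_pos h1mem, if_pos h0mem] at hc
  rw [hc] at h1
  -- now h1 : c 1 0 + (if 1 ≤ q then c 0 1 else 0) = 0
  rcases Nat.eq_zero_or_pos q with hq0 | hq1
  · subst hq0
    simp only [hc_def] at h1
    simp only [Nat.choose_one_right, Nat.choose_zero_right, Nat.choose_self] at h1 ⊢
    simp only [Nat.cast_zero, zero_mul, add_zero]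
    simp only [if_neg (by norm_num : ¬ (1:ℕ) ≤ 0), Nat.sub_zero] at h1
    push_cast at h1 ⊢
    linear_combination h1
  · have hq1' : 1 ≤ q := hq1
    rw [if_pos hq1'] at h1
    simp only [hc_def, Nat.choose_one_right, Nat.choose_zero_right, Nat.sub_zero,
      pow_one, pow_zero, Nat.cast_one, one_mul, mul_one] at h1
    push_cast at h1 ⊢
    linear_combination h1

/-- necessity direction of the main Theorem: invariance under the
one-parameter group of null rotations with parameters t·B, t ∈ ℝ, forces the
vanishing and linear conditions of the main theorem. -/
theorem stmt_5 (m n : ℕ) (hm : 1 ≤ m) (hnm : n ≤ m) (B : ℂ) (hB : B ≠ 0)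
    (χ : ℕ × ℕ → ℂ)
    (hinv : ∀ t : ℝ, ∀ a b : ℕ, a ≤ m → b ≤ n →
      (∑ r ∈ Finset.range (a + 1), ∑ s ∈ Finset.range (b + 1),
          (a.choose r : ℂ) * (b.choose s : ℂ) * ((t : ℂ) * B) ^ r *
            ((starRingEnd ℂ) ((t : ℂ) * B)) ^ s * χ (a - r, b - s))
        = χ (a, b)) :
    (∀ a b : ℕ, a ≤ m → b ≤ n → a + b ≤ m - 1 → χ (a, b) = 0) ∧
    (∀ a b : ℕ, a + 1 ≤ m → 1 ≤ b → b ≤ n → m ≤ a + b → a + b ≤ m + n - 1 →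
      ((a + 1 : ℕ) : ℂ) * B * χ (a, b)
        + (b : ℂ) * (starRingEnd ℂ) B * χ (a + 1, b - 1) = 0) := by
  have key := key_lemma m n B χ hinv
  constructor
  · intro a b
    induction b generalizing a with
    | zero =>
      intro ha _ hab
      have h := key (a + 1) 0 (by omega) (by omega) (by omega)
      simp only [Nat.add_sub_cancel, Nat.cast_zero, zero_mul, add_zero] at h
      have hA : ((a + 1 : ℕ) : ℂ) * B ≠ 0 :=
        mul_ne_zero (Nat.cast_ne_zero.mpr (Nat.succ_ne_zero a)) hB
      rcases mul_eq_zero.mp h with h' | h'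
      · exact absurd h' hA
      · exact h'
    | succ b ih =>
      intro ha hb hab
      have h := key (a + 1) (b + 1) (by omega) (by omega) (by omega)
      simp only [Nat.add_sub_cancel] at h
      have hz : χ (a + 1, b) = 0 := ih (a + 1) (by omega) (by omega) (by omega)
      rw [hz, mul_zero, add_zero] at h
      have hA : ((a + 1 : ℕ) : ℂ) * B ≠ 0 :=
        mul_ne_zero (Nat.cast_ne_zero.mpr (Nat.succ_ne_zero a)) hB
      rcases mul_eq_zero.mp h with h' | h'
      · exact absurd h' hA
      · exact h'
  · intro a b ha hb1 hbn _ _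
    have h := key (a + 1) b (by omega) (by omega) hbn
    simpa using h
end

section
/- Let m ≥ 1, n ≥ 1, m ≥ n, and let χ : {0,...,m} × {0,...,n} → ℂ be invariant under the two-parameter group of null rotations, i.e., χ*(a,b) = Σ_{r=0}^{a} Σ_{s=0}^{b} C(a,r) C(b,s) B^r conj(B)^s χ(a-r,b-s) = χ(a,b) for all (a,b) and ALL B ∈ ℂ. Then χ(a,b) = 0 for all (a,b) ≠ (m,n). -/
/-- invariance under the full two-parameter group of null rotations
(i.e. for every complex B) forces all components except the top one χ(m,n) to
vanish. -/
theorem stmt_6 (m n : ℕ) (hm : 1 ≤ m) (hn : 1 ≤ n) (hnm : n ≤ m)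
    (χ : ℕ × ℕ → ℂ)
    (hinv : ∀ B : ℂ, ∀ a b : ℕ, a ≤ m → b ≤ n →
      (∑ r ∈ Finset.range (a + 1), ∑ s ∈ Finset.range (b + 1),
          (a.choose r : ℂ) * (b.choose s : ℂ) * B ^ r * ((starRingEnd ℂ) B) ^ s *
            χ (a - r, b - s))
        = χ (a, b)) :
    ∀ a b : ℕ, a ≤ m → b ≤ n → (a, b) ≠ (m, n) → χ (a, b) = 0 := by
  have key : ∀ k : ℕ, ∀ a b : ℕ, a + b = k → a ≤ m → b ≤ n → (a, b) ≠ (m, n) → χ (a, b) = 0 := by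
    intro k
    induction k using Nat.strong_induction_on with
    | _ k IH =>
      intro a b hab ha hb hne
      have habmn : a + b < m + n := by
        rcases Nat.lt_or_ge a m with h | h
        · omega
        · have : a = m := le_antisymm ha h
          have : b ≠ n := by
            intro hbn; exact hne (by rw [this, hbn])
          omega
      have hlow : ∀ u v : ℕ, u ≤ m → v ≤ n → u + v < k → χ (u, v) = 0 := by
        intro u v hu hv huv
        refine IH (u + v) huv u v rfl hu hv ?_
        intro hc
        have h1 : u = m := congrArg Prod.fst hc
        have h2 : v = n := congrArg Prod.snd hc
        omega
      have step : ∀ p q : ℕ, p + 1 ≤ m → q ≤ n → p + q = k → ∀ B : ℂ,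
          ((p : ℂ) + 1) * B * χ (p, q) + (q : ℂ) * ((starRingEnd ℂ) B) * χ (p + 1, q - 1) = 0 := by
        intro p q hpm hq hpq B
        have hz : ∀ r s : ℕ, r ≤ p + 1 → s ≤ q → 2 ≤ r + s → χ (p + 1 - r, q - s) = 0 := by
          intro r s hr hs hrs
          exact hlow _ _ (by omega) (by omega) (by omega)
        set F : ℕ → ℂ := fun r => ∑ s ∈ Finset.range (q + 1),
            ((p + 1).choose r : ℂ) * (q.choose s : ℂ) * B ^ r * ((starRingEnd ℂ) B) ^ s *
              χ (p + 1 - r, q - s) with hF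
        have h : ∑ r ∈ Finset.range (p + 1 + 1), F r = χ (p + 1, q) := hinv B (p + 1) q hpm hq
        rw [Finset.sum_range_succ', Finset.sum_range_succ'] at h
        have hF2 : ∀ r ∈ Finset.range p, F (r + 1 + 1) = 0 := by
          intro r hr
          rw [Finset.mem_range] at hr
          simp only [hF]
          apply Finset.sum_eq_zero
          intro s hs
          rw [Finset.mem_range] at hs
          rw [hz (r + 1 + 1) s (by omega) (by omega) (by omega)]
          ring
        have hF1 : F (0 + 1) = ((p : ℂ) + 1) * B * χ (p, q) := by
          simp only [hF]
          rw [Finset.sum_range_succ']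
          have hz1 : ∀ s ∈ Finset.range q,
              ((p + 1).choose (0 + 1) : ℂ) * (q.choose (s + 1) : ℂ) * B ^ (0 + 1) *
                ((starRingEnd ℂ) B) ^ (s + 1) * χ (p + 1 - (0 + 1), q - (s + 1)) = 0 := by
            intro s hs
            rw [Finset.mem_range] at hs
            rw [hz (0 + 1) (s + 1) (by omega) (by omega) (by omega)]
            ring
          rw [Finset.sum_eq_zero hz1]
          simp [Nat.choose_one_right]
          try push_cast
          try ring
        have hF0 : F 0 = χ (p + 1, q) + (q : ℂ) * ((starRingEnd ℂ) B) * χ (p + 1, q - 1) := by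
          simp only [hF]
          cases q with
          | zero => simp
          | succ q' =>
            rw [Finset.sum_range_succ', Finset.sum_range_succ']
            have hz0 : ∀ s ∈ Finset.range q',
                (((p + 1).choose 0 : ℂ)) * ((q' + 1).choose (s + 1 + 1) : ℂ) * B ^ 0 *
                  ((starRingEnd ℂ) B) ^ (s + 1 + 1) * χ (p + 1 - 0, q' + 1 - (s + 1 + 1)) = 0 := by
              intro s hs
              rw [Finset.mem_range] at hs
              rw [hz 0 (s + 1 + 1) (by omega) (by omega) (by omega)]
              ring
            rw [Finset.sum_eq_zero hz0]
            simp [Nat.choose_one_right]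
            try push_cast
            try ring
        rw [Finset.sum_eq_zero hF2, hF1, hF0] at h
        linear_combination h
      rcases Nat.lt_or_ge a m with hlt | hge
      · -- a < m : use the relation at (a+1, b)
        have e1 := step a b (by omega) hb hab 1
        have e2 := step a b (by omega) hb hab Complex.I
        simp only [map_one, Complex.conj_I, one_pow, mul_one, one_mul] at e1 e2
        have hX : (2 * Complex.I * ((a : ℂ) + 1)) * χ (a, b) = 0 := by
          linear_combination Complex.I * e1 + e2
        have hne0 : (2 * Complex.I * ((a : ℂ) + 1)) ≠ 0 := by
          have h1 : ((a : ℂ) + 1) ≠ 0 := by exact_mod_cast Nat.succ_ne_zero a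
          simp [Complex.I_ne_zero, h1]
        exact (mul_eq_zero.mp hX).resolve_left hne0
      · -- a = m, b < n : use the relation at (m, b+1)
        have ham : a = m := le_antisymm ha hge
        have hbn : b < n := by
          rcases Nat.lt_or_ge b n with h | h
          · exact h
          · exact absurd (by rw [ham, le_antisymm hb h]) hne
        have e1 := step (m - 1) (b + 1) (by omega) (by omega) (by omega) 1
        have e2 := step (m - 1) (b + 1) (by omega) (by omega) (by omega) Complex.I
        simp only [map_one, Complex.conj_I, one_pow, mul_one, one_mul,
          Nat.add_sub_cancel] at e1 e2
        rw [show m - 1 + 1 = m from by omega] at e1 e2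
        have hX : (2 * Complex.I * ((b : ℂ) + 1)) * χ (m, b) = 0 := by
          push_cast at e1 e2 ⊢
          linear_combination Complex.I * e1 - e2
        have hne0 : (2 * Complex.I * ((b : ℂ) + 1)) ≠ 0 := by
          have h1 : ((b : ℂ) + 1) ≠ 0 := by exact_mod_cast Nat.succ_ne_zero b
          simp [Complex.I_ne_zero, h1]
        rw [ham]
        exact (mul_eq_zero.mp hX).resolve_left hne0
  intro a b ha hb hne
  exact key (a + b) a b rfl ha hb hne
end

section
/- Let m ≥ n ≥ 1 and B ∈ ℂ nonzero. Suppose χ : {0,...,m} × {0,...,n} → ℂ satisfies the linear conditions p·B·χ(p-1,q) + q·conj(B)·χ(p,q-1) = 0 for all p,q ≥ 1 on two consecutive lines p+q = k and p+q = k+1 (with m+1 ≤ k ≤ m+n-1). Then the quadratic cross relations hold: for all valid indices and all pairs (p,q) and (p',q') with p+q = p'+q' lying in {k, k+1}, p·q'·χ(p-1,q)·χ(p',q'-1) = p'·q·χ(p,q-1)·χ(p'-1,q'). -/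
/-- eliminating the unknown ratio conj(B)/B between two instances
of the linear invariance condition on the same line yields B-independent
quadratic cross relations among the components. -/
theorem stmt_8 (m n k : ℕ) (hn : 1 ≤ n) (hnm : n ≤ m)
    (hk1 : m + 1 ≤ k) (hk2 : k ≤ m + n - 1) (B : ℂ) (hB : B ≠ 0)
    (χ : ℕ × ℕ → ℂ)
    (hlin : ∀ p q : ℕ, 1 ≤ p → 1 ≤ q → p ≤ m → q ≤ n →
      (p + q = k ∨ p + q = k + 1) →
      (p : ℂ) * B * χ (p - 1, q) + (q : ℂ) * (starRingEnd ℂ) B * χ (p, q - 1) = 0) :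
    ∀ p q p' q' : ℕ, 1 ≤ p → 1 ≤ q → 1 ≤ p' → 1 ≤ q' →
      p ≤ m → q ≤ n → p' ≤ m → q' ≤ n →
      p + q = p' + q' → (p + q = k ∨ p + q = k + 1) →
      (p : ℂ) * (q' : ℂ) * χ (p - 1, q) * χ (p', q' - 1)
        = (p' : ℂ) * (q : ℂ) * χ (p, q - 1) * χ (p' - 1, q') := by
  intro p q p' q' hp hq hp' hq' hpm hqn hp'm hq'n hsum hline
  have h1 := hlin p q hp hq hpm hqn hline
  have h2 := hlin p' q' hp' hq' hp'm hq'n (hsum ▸ hline)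
  apply mul_left_cancel₀ hB
  linear_combination ((q' : ℂ) * χ (p', q' - 1)) * h1 - ((q : ℂ) * χ (p, q - 1)) * h2
end

section
/- Let m ≥ n ≥ 1 and suppose χ : {0,...,m} × {0,...,n} → ℂ satisfies: χ(m-1, n) ≠ 0, and the quadratic relations m·q·χ(p, q-1)·χ(m-1, n) = n·p·χ(p-1, q)·χ(m, n-1) for all p, q ≥ 1 with m ≤ p + q - 1 ≤ m + n - 2, and also m·B·χ(m-1,n) + n·conj(B)·χ(m, n-1) = 0 for some nonzero B ∈ ℂ. Then the linear conditions (p)·B·χ(p-1, q) + q·conj(B)·χ(p, q-1) = 0 hold for all p, q ≥ 1 with m+1 ≤ p + q ≤ m + n. -/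
/-- if the top line contains the nonzero term χ(m-1,n), the single
linear condition at (m,n) determines the ratio conj(B)/B, and the quadratic
relations then imply the full set of linear conditions. -/
theorem stmt_9 (m n : ℕ) (hn : 1 ≤ n) (hnm : n ≤ m) (χ : ℕ × ℕ → ℂ)
    (hne : χ (m - 1, n) ≠ 0)
    (hquad : ∀ p q : ℕ, 1 ≤ p → 1 ≤ q → p ≤ m → q ≤ n →
      m ≤ p + q - 1 → p + q - 1 ≤ m + n - 2 →
      (m : ℂ) * (q : ℂ) * χ (p, q - 1) * χ (m - 1, n)
        = (n : ℂ) * (p : ℂ) * χ (p - 1, q) * χ (m, n - 1))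
    (B : ℂ) (hB : B ≠ 0)
    (hlin0 : (m : ℂ) * B * χ (m - 1, n)
      + (n : ℂ) * (starRingEnd ℂ) B * χ (m, n - 1) = 0) :
    ∀ p q : ℕ, 1 ≤ p → 1 ≤ q → p ≤ m → q ≤ n →
      m + 1 ≤ p + q → p + q ≤ m + n →
      (p : ℂ) * B * χ (p - 1, q) + (q : ℂ) * (starRingEnd ℂ) B * χ (p, q - 1) = 0 := by
  intro p q hp hq hpm hqn h1 h2
  by_cases hcase : p + q = m + n
  · obtain ⟨rfl, rfl⟩ : p = m ∧ q = n := by omega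
    exact hlin0
  · have hq' := hquad p q hp hq hpm hqn (by omega) (by omega)
    have hm0 : (m : ℂ) ≠ 0 := Nat.cast_ne_zero.mpr (by omega)
    have key : (m : ℂ) * χ (m - 1, n) *
        ((p : ℂ) * B * χ (p - 1, q) + (q : ℂ) * (starRingEnd ℂ) B * χ (p, q - 1)) = 0 := by
      linear_combination (starRingEnd ℂ) B * hq' + (p : ℂ) * χ (p - 1, q) * hlin0
    rcases mul_eq_zero.mp key with h | h
    · rcases mul_eq_zero.mp h with h' | h'
      · exact absurd h' hm0
      · exact absurd h' hne
    · exact h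
end

section
/- Let m ≥ 2, n ≥ 1, and suppose χ : {0,...,m} × {0,...,n} → ℂ is invariant under the one-parameter group of null rotations with parameter tB (t ∈ ℝ, B ≠ 0 fixed), i.e., Σ_{r,s} C(a,r)C(b,s)(tB)^r (conj(tB))^s χ(a-r,b-s) = χ(a,b) for all (a,b) and all t. Then χ(a, 0) = 0 for all 0 ≤ a ≤ m-1 and χ(0, b) = 0 for all 0 ≤ b ≤ n-1. -/
open Polynomial in
lemma aux_zero (N : ℕ) (g : ℕ → ℂ)
    (h : ∀ t : ℝ, ∑ k ∈ Finset.range (N+1), g k * (t:ℂ)^k = 0) :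
    ∀ k, k ≤ N → g k = 0 := by
  set p : ℂ[X] := ∑ k ∈ Finset.range (N+1), C (g k) * X ^ k with hpdef
  have hroots : ∀ t : ℝ, p.IsRoot (t:ℂ) := by
    intro t
    simp only [Polynomial.IsRoot, hpdef, Polynomial.eval_finset_sum, Polynomial.eval_mul,
      Polynomial.eval_C, Polynomial.eval_pow, Polynomial.eval_X]
    exact h t
  have hp : p = 0 := by
    apply p.eq_zero_of_infinite_isRoot
    apply (Set.infinite_range_of_injective Complex.ofReal_injective).mono
    rintro x ⟨t, rfl⟩
    exact hroots t
  intro k hk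
  have hcoeff : p.coeff k = g k := by
    rw [hpdef, Polynomial.finset_sum_coeff]
    simp only [Polynomial.coeff_C_mul, Polynomial.coeff_X_pow, mul_ite, mul_one, mul_zero]
    rw [Finset.sum_ite_eq (Finset.range (N+1)) k g]
    simp [Nat.lt_succ_iff, hk]
  rw [hp] at hcoeff
  simpa using hcoeff.symm

lemma aux_const (N : ℕ) (g : ℕ → ℂ) (c : ℂ)
    (h : ∀ t : ℝ, ∑ k ∈ Finset.range (N+1), g k * (t:ℂ)^k = c) :
    ∀ k, 1 ≤ k → k ≤ N → g k = 0 := by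
  intro k hk1 hkN
  have hmain := aux_zero N (fun k => g k - if k = 0 then c else 0) ?_ k hkN
  · have hk0 : k ≠ 0 := by omega
    simpa [hk0] using hmain
  · intro t
    have h1 := h t
    have h2 : ∑ k ∈ Finset.range (N+1), (if k = 0 then c else 0) * (t:ℂ)^k = c := by
      rw [Finset.sum_eq_single 0]
      · simp
      · intro b _ hb0; simp [hb0]
      · simp
    simp only [sub_mul, Finset.sum_sub_distrib, h1, h2, sub_self]

/-- first step of the proof of Lemma 1: invariance under the
one-parameter group of null rotations forces the pure-index components
χ(a,0), a ≤ m-1, and χ(0,b), b ≤ n-1, to vanish. -/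
theorem stmt_12 (m n : ℕ) (hm : 2 ≤ m) (hn : 1 ≤ n) (B : ℂ) (hB : B ≠ 0)
    (χ : ℕ × ℕ → ℂ)
    (hinv : ∀ t : ℝ, ∀ a b : ℕ, a ≤ m → b ≤ n →
      (∑ r ∈ Finset.range (a + 1), ∑ s ∈ Finset.range (b + 1),
          (a.choose r : ℂ) * (b.choose s : ℂ) * ((t : ℂ) * B) ^ r *
            ((starRingEnd ℂ) ((t : ℂ) * B)) ^ s * χ (a - r, b - s))
        = χ (a, b)) :
    (∀ a : ℕ, a ≤ m - 1 → χ (a, 0) = 0) ∧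
    (∀ b : ℕ, b ≤ n - 1 → χ (0, b) = 0) := by
  constructor
  · intro a ha
    have h := aux_const m (fun r => (m.choose r : ℂ) * B ^ r * χ (m - r, 0)) (χ (m, 0)) ?_
      (m - a) (by omega) (by omega)
    · have hc : (m.choose (m-a) : ℂ) ≠ 0 :=
        Nat.cast_ne_zero.mpr (Nat.choose_pos (show m - a ≤ m by omega)).ne'
      have hB' : B ^ (m - a) ≠ 0 := pow_ne_zero _ hB
      have hma : m - (m - a) = a := by omega
      simpa [hma, hc, hB', mul_eq_zero] using h
    · intro t
      have h0 := hinv t m 0 le_rfl (Nat.zero_le n)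
      simp only [zero_add, Finset.sum_range_one, Nat.choose_self, Nat.cast_one, pow_zero, mul_one,
        Nat.sub_zero] at h0
      rw [← h0]
      apply Finset.sum_congr rfl
      intro r _
      ring
  · intro b hb
    have h := aux_const n (fun s => (n.choose s : ℂ) * ((starRingEnd ℂ) B) ^ s * χ (0, n - s))
      (χ (0, n)) ?_ (n - b) (by omega) (by omega)
    · have hc : (n.choose (n-b) : ℂ) ≠ 0 :=
        Nat.cast_ne_zero.mpr (Nat.choose_pos (show n - b ≤ n by omega)).ne'
      have hB' : ((starRingEnd ℂ) B) ^ (n - b) ≠ 0 := pow_ne_zero _ (by simpa using hB)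
      have hnb : n - (n - b) = b := by omega
      simpa [hnb, hc, hB', mul_eq_zero] using h
    · intro t
      have h0 := hinv t 0 n (Nat.zero_le m) le_rfl
      simp only [zero_add, Finset.sum_range_one, Nat.choose_self, Nat.cast_one, pow_zero, mul_one,
        one_mul, Nat.sub_zero] at h0
      rw [← h0]
      apply Finset.sum_congr rfl
      intro s _
      rw [map_mul, Complex.conj_ofReal]
      ring
end

section
/- Let m ≥ 1, n ≥ 1, B ∈ ℂ nonzero, and suppose all components of χ : {0,...,m} × {0,...,n} → ℂ vanish on lines a+b ≤ j for some j with 1 ≤ j ≤ m-2, and additionally χ(j+1, 0) = 0, and the linear conditions p·B·χ(p-1,q) + q·conj(B)·χ(p,q-1) = 0 hold for all p,q ≥ 1 with p+q = j+2. Then χ(a,b) = 0 for all a+b = j+1. -/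
/-- induction step in Lemma 1: vanishing on lines up to j,
vanishing of χ(j+1,0), and the linear conditions on the line j+2 together force
all components on the line j+1 to vanish. -/
theorem stmt_13 (m n j : ℕ) (hm : 1 ≤ m) (hn : 1 ≤ n) (hj1 : 1 ≤ j)
    (hj2 : j ≤ m - 2) (B : ℂ) (hB : B ≠ 0) (χ : ℕ × ℕ → ℂ)
    (hvanish : ∀ a b : ℕ, a ≤ m → b ≤ n → a + b ≤ j → χ (a, b) = 0)
    (htop : χ (j + 1, 0) = 0)
    (hlin : ∀ p q : ℕ, 1 ≤ p → 1 ≤ q → p ≤ m → q ≤ n → p + q = j + 2 →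
      (p : ℂ) * B * χ (p - 1, q) + (q : ℂ) * (starRingEnd ℂ) B * χ (p, q - 1) = 0) :
    ∀ a b : ℕ, a ≤ m → b ≤ n → a + b = j + 1 → χ (a, b) = 0 := by
  have key : ∀ b : ℕ, b ≤ n → b ≤ j + 1 → χ (j + 1 - b, b) = 0 := by
    intro b
    induction b with
    | zero => intro _ _; simpa using htop
    | succ b ih =>
      intro hbn hbj
      have hprev := ih (by omega) (by omega)
      have h := hlin (j + 1 - b) (b + 1) (by omega) (by omega) (by omega) hbn (by omega)
      simp only [Nat.add_sub_cancel] at h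
      rw [hprev] at h
      have h2 : ((j + 1 - b : ℕ) : ℂ) * B * χ (j + 1 - b - 1, b + 1) = 0 := by
        simpa using h
      have hne : ((j + 1 - b : ℕ) : ℂ) * B ≠ 0 :=
        mul_ne_zero (Nat.cast_ne_zero.mpr (by omega)) hB
      have h3 := (mul_eq_zero.mp h2).resolve_left hne
      have : j + 1 - b - 1 = j + 1 - (b + 1) := by omega
      rwa [this] at h3
  intro a b ham hbn hab
  obtain rfl : a = j + 1 - b := by omega
  exact key b hbn (by omega)
end

section
/- Let m ≥ n ≥ 1 and suppose χ : {0,...,m} × {0,...,n} → ℂ satisfies χ(a,b) = 0 for a+b ≤ m-1 and is invariant (in the sense of the transform being identity for all real t) under null rotations with parameters tB₁ and tB₂ where B₁, B₂ ∈ ℂ are nonzero and B₂/B₁ ∉ ℝ. Then χ(a,b) = 0 for all (a,b) with a + b ≤ m + n - 1, i.e., only χ(m,n) can be nonzero. -/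
/-- Auxiliary: the double binomial sum collapses to three terms when all
components two or more levels down vanish. -/
lemma aux_sum_collapse (A Bv : ℕ) (hA : 1 ≤ A) (hBv : 1 ≤ Bv) (B : ℂ) (χ : ℕ × ℕ → ℂ)
    (hz : ∀ r s : ℕ, r ≤ A → s ≤ Bv → 2 ≤ r + s → χ (A - r, Bv - s) = 0) :
    (∑ r ∈ Finset.range (A + 1), ∑ s ∈ Finset.range (Bv + 1),
        (A.choose r : ℂ) * (Bv.choose s : ℂ) * B ^ r *
          ((starRingEnd ℂ) B) ^ s * χ (A - r, Bv - s))
      = χ (A, Bv) + ((A : ℂ) * B * χ (A - 1, Bv)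
          + (Bv : ℂ) * (starRingEnd ℂ) B * χ (A, Bv - 1)) := by
  set F : ℕ → ℕ → ℂ := fun r s =>
    (A.choose r : ℂ) * (Bv.choose s : ℂ) * B ^ r *
      ((starRingEnd ℂ) B) ^ s * χ (A - r, Bv - s) with hF
  have h0mem : (0 : ℕ) ∈ Finset.range (A + 1) := Finset.mem_range.mpr (by omega)
  have h1memA : (1 : ℕ) ∈ Finset.range (A + 1) := Finset.mem_range.mpr (by omega)
  have h0memB : (0 : ℕ) ∈ Finset.range (Bv + 1) := Finset.mem_range.mpr (by omega)
  have h1memB : (1 : ℕ) ∈ Finset.range (Bv + 1) := Finset.mem_range.mpr (by omega)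
  have Houter : (∑ r ∈ Finset.range (A + 1), ∑ s ∈ Finset.range (Bv + 1), F r s)
      = (∑ s ∈ Finset.range (Bv + 1), F 0 s) + (∑ s ∈ Finset.range (Bv + 1), F 1 s) := by
    refine Finset.sum_eq_add_of_mem 0 1 h0mem h1memA (by decide) ?_
    intro r hr ⟨hr0, hr1⟩
    refine Finset.sum_eq_zero fun s hs => ?_
    have hrA : r ≤ A := by
      have := Finset.mem_range.mp hr; omega
    have hsB : s ≤ Bv := by
      have := Finset.mem_range.mp hs; omega
    rw [hF]
    simp only
    rw [hz r s hrA hsB (by omega), mul_zero]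
  have H0 : (∑ s ∈ Finset.range (Bv + 1), F 0 s) = F 0 0 + F 0 1 := by
    refine Finset.sum_eq_add_of_mem 0 1 h0memB h1memB (by decide) ?_
    intro s hs ⟨hs0, hs1⟩
    have hsB : s ≤ Bv := by
      have := Finset.mem_range.mp hs; omega
    rw [hF]; simp only
    rw [hz 0 s (by omega) hsB (by omega), mul_zero]
  have H1 : (∑ s ∈ Finset.range (Bv + 1), F 1 s) = F 1 0 := by
    refine Finset.sum_eq_single_of_mem 0 h0memB ?_
    intro s hs hs0
    have hsB : s ≤ Bv := by
      have := Finset.mem_range.mp hs; omega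
    rw [hF]; simp only
    rw [hz 1 s (by omega) hsB (by omega), mul_zero]
  rw [Houter, H0, H1, hF]
  simp only [Nat.choose_zero_right, Nat.choose_one_right, pow_zero, pow_one,
    Nat.cast_one, Nat.sub_zero]
  ring

/-- invariance under two one-parameter groups of null rotations
with ℝ-linearly independent parameters B₁, B₂ forces all components except the
top one χ(m,n) to vanish. -/
theorem stmt_18 (m n : ℕ) (hn : 1 ≤ n) (hnm : n ≤ m)
    (B₁ B₂ : ℂ) (hB₁ : B₁ ≠ 0) (hB₂ : B₂ ≠ 0)
    (hind : ¬ ∃ r : ℝ, B₂ = (r : ℂ) * B₁)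
    (χ : ℕ × ℕ → ℂ)
    (h0 : ∀ a b : ℕ, a ≤ m → b ≤ n → a + b ≤ m - 1 → χ (a, b) = 0)
    (hinv1 : ∀ t : ℝ, ∀ a b : ℕ, a ≤ m → b ≤ n →
      (∑ r ∈ Finset.range (a + 1), ∑ s ∈ Finset.range (b + 1),
          (a.choose r : ℂ) * (b.choose s : ℂ) * ((t : ℂ) * B₁) ^ r *
            ((starRingEnd ℂ) ((t : ℂ) * B₁)) ^ s * χ (a - r, b - s))
        = χ (a, b))
    (hinv2 : ∀ t : ℝ, ∀ a b : ℕ, a ≤ m → b ≤ n →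
      (∑ r ∈ Finset.range (a + 1), ∑ s ∈ Finset.range (b + 1),
          (a.choose r : ℂ) * (b.choose s : ℂ) * ((t : ℂ) * B₂) ^ r *
            ((starRingEnd ℂ) ((t : ℂ) * B₂)) ^ s * χ (a - r, b - s))
        = χ (a, b)) :
    ∀ a b : ℕ, a ≤ m → b ≤ n → a + b ≤ m + n - 1 → χ (a, b) = 0 := by
  -- determinant is nonzero
  have hdet : B₁ * (starRingEnd ℂ) B₂ - B₂ * (starRingEnd ℂ) B₁ ≠ 0 := by
    intro h
    apply hind
    refine ⟨(B₂ / B₁).re, ?_⟩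
    have hc1 : (starRingEnd ℂ) B₁ ≠ 0 := by simpa using hB₁
    have hreal : (starRingEnd ℂ) (B₂ / B₁) = B₂ / B₁ := by
      rw [map_div₀, div_eq_div_iff hc1 hB₁]
      linear_combination h
    have hre : ((B₂ / B₁).re : ℂ) = B₂ / B₁ := Complex.conj_eq_iff_re.mp hreal
    rw [hre]
    field_simp
  suffices H : ∀ k : ℕ, ∀ a b : ℕ, a ≤ m → b ≤ n → a + b ≤ m + n - 1 → a + b = k →
      χ (a, b) = 0 by
    exact fun a b ha hb hab => H (a + b) a b ha hb hab rfl
  intro k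
  induction k using Nat.strong_induction_on with
  | _ k IH =>
    intro a b ha hb hab hk
    -- key relation extracted from invariance at t = 1
    have rel : ∀ (B : ℂ),
        (∀ t : ℝ, ∀ a b : ℕ, a ≤ m → b ≤ n →
          (∑ r ∈ Finset.range (a + 1), ∑ s ∈ Finset.range (b + 1),
              (a.choose r : ℂ) * (b.choose s : ℂ) * ((t : ℂ) * B) ^ r *
                ((starRingEnd ℂ) ((t : ℂ) * B)) ^ s * χ (a - r, b - s))
            = χ (a, b)) →
        ∀ A Bv : ℕ, 1 ≤ A → A ≤ m → 1 ≤ Bv → Bv ≤ n → A + Bv = k + 1 →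
          (A : ℂ) * B * χ (A - 1, Bv) + (Bv : ℂ) * (starRingEnd ℂ) B * χ (A, Bv - 1) = 0 := by
      intro B hinv A Bv hA1 hAm hBv1 hBvn hABk
      have hz : ∀ r s : ℕ, r ≤ A → s ≤ Bv → 2 ≤ r + s → χ (A - r, Bv - s) = 0 := by
        intro r s hrA hsB hrs
        exact IH ((A - r) + (Bv - s)) (by omega) (A - r) (Bv - s) (by omega) (by omega)
          (by omega) rfl
      have heq := hinv 1 A Bv hAm hBvn
      have hone : ((1 : ℝ) : ℂ) * B = B := by push_cast; ring
      rw [hone] at heq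
      rw [aux_sum_collapse A Bv hA1 hBv1 B χ hz] at heq
      linear_combination heq
    -- solving the 2×2 system: both lower components of any valid corner vanish
    have both : ∀ A Bv : ℕ, 1 ≤ A → A ≤ m → 1 ≤ Bv → Bv ≤ n → A + Bv = k + 1 →
        χ (A - 1, Bv) = 0 ∧ χ (A, Bv - 1) = 0 := by
      intro A Bv hA1 hAm hBv1 hBvn hABk
      have e1 := rel B₁ hinv1 A Bv hA1 hAm hBv1 hBvn hABk
      have e2 := rel B₂ hinv2 A Bv hA1 hAm hBv1 hBvn hABk
      have hAne : (A : ℂ) ≠ 0 := Nat.cast_ne_zero.mpr (by omega)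
      have hBvne : (Bv : ℂ) ≠ 0 := Nat.cast_ne_zero.mpr (by omega)
      have hx : χ (A - 1, Bv) = 0 := by
        have h : (A : ℂ) * (B₁ * (starRingEnd ℂ) B₂ - B₂ * (starRingEnd ℂ) B₁) *
            χ (A - 1, Bv) = 0 := by
          linear_combination (starRingEnd ℂ) B₂ * e1 - (starRingEnd ℂ) B₁ * e2
        rcases mul_eq_zero.mp h with h' | h'
        · rcases mul_eq_zero.mp h' with h'' | h''
          · exact absurd h'' hAne
          · exact absurd h'' hdet
        · exact h'
      refine ⟨hx, ?_⟩
      have hc1 : (starRingEnd ℂ) B₁ ≠ 0 := by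
        simpa using hB₁
      have h : (Bv : ℂ) * (starRingEnd ℂ) B₁ * χ (A, Bv - 1) = 0 := by
        rw [hx] at e1
        linear_combination e1
      rcases mul_eq_zero.mp h with h' | h'
      · rcases mul_eq_zero.mp h' with h'' | h''
        · exact absurd h'' hBvne
        · exact absurd h'' hc1
      · exact h'
    by_cases ham : a = m
    · -- a = m, so b ≤ n - 1; use corner (a, b+1)
      have := both a (b + 1) (by omega) (by omega) (by omega) (by omega) (by omega)
      simpa using this.2
    · by_cases hb0 : b = 0
      · subst hb0
        exact h0 a 0 ha hb (by omega)
      · -- a < m, b ≥ 1; use corner (a+1, b)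
        have := both (a + 1) b (by omega) (by omega) (by omega) hb (by omega)
        simpa using this.1
end
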